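/- For every k ∈ ℕ there exist constants δ₀ > 0 and C > 0, depending only on k, with the following property: if w₁, …, w_k are vectors in a real inner product space such that |⟨w_i, w_j⟩ − δ_{ij}| ≤ δ for all 1 ≤ i, j ≤ k, where 0 ≤ δ ≤ δ₀, then w₁, …, w_k are linearly independent, the Gram–Schmidt orthonormalization applied to w₁, …, w_k is well-defined and produces an orthonormal family v₁, …, v_k spanning the same subspace, and ‖w_j − v_j‖ ≤ C δ for all 1 ≤ j ≤ k. -/

import Mathlib

/-!
Let `u = gramSchmidt w` and let `v` be its normalization. The defect `w j - u j` is the sum of the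
projections `⟪v i, w j⟫ • v i` over `i < j`, and since `w i` and `w j` are almost orthogonal each
coefficient is at most `δ + (1 + δ) ‖w i - v i‖`. Together with `‖u - v‖ ≤ |‖u‖ - 1|` and
`|‖w j‖ - 1| ≤ δ`, the errors `e j = ‖w j - v j‖` satisfy a discrete Grönwall inequality
`e j ≤ a + b ∑_{i<j} e i` with `a = O(δ)`, hence `e j = O(δ)`. None of these estimates assumes
`u j ≠ 0`; that follows once `e j < ‖w j‖`, and a Gram–Schmidt process without vanishing vectors
forces linear independence.
-/

open RealInnerProductSpace

universe u

/-- Gram–Schmidt orthonormalization of a family indexed by `Fin k`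
(this is Mathlib's `gramSchmidtNormed`, with the instances pinned down). -/
noncomputable def gsNormed {F : Type u} [NormedAddCommGroup F] [InnerProductSpace ℝ F]
    {k : ℕ} (w : Fin k → F) : Fin k → F :=
  @InnerProductSpace.gramSchmidtNormed ℝ F _ _ _ (Fin k) _ _ (inferInstance : WellFoundedLT (Fin k)) w

open Finset InnerProductSpace

theorem abs_sub_one_le_of_abs_sq_sub_one_le {a δ : ℝ} (ha : 0 ≤ a) (h : |a ^ 2 - 1| ≤ δ) :
    |a - 1| ≤ δ := by
  refine le_trans ?_ h
  rw [show a ^ 2 - 1 = (a - 1) * (a + 1) by ring, abs_mul]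
  exact le_mul_of_one_le_right (abs_nonneg _) (by rw [abs_of_nonneg (by linarith)]; linarith)

theorem Fin.le_mul_pow_of_le_add_mul_sum {k : ℕ} {e : Fin k → ℝ} {a b : ℝ} (hb : 0 ≤ b)
    (h : ∀ j, e j ≤ a + b * ∑ i ∈ Iio j, e i) (j : Fin k) : e j ≤ a * (1 + b) ^ (j : ℕ) := by
  induction j using WellFoundedLT.induction with
  | _ j ih =>
    calc e j ≤ a + b * ∑ i ∈ Iio j, a * (1 + b) ^ (i : ℕ) :=
          (h j).trans (by gcongr with i hi; exact ih i (mem_Iio.1 hi))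
      _ = a + a * (b * ∑ m ∈ range j, (1 + b) ^ m) := by
          rw [← mul_sum, ← Nat.Iio_eq_range, ← Fin.map_valEmbedding_Iio, sum_map]
          simp only [Fin.valEmbedding_apply]
          ring
      _ = a * (1 + b) ^ (j : ℕ) := by
          have hgeom := geom_sum_mul (1 + b) j
          rw [add_sub_cancel_left] at hgeom
          rw [mul_comm b, hgeom]
          ring

section GramSchmidt

variable {𝕜 E ι : Type*} [RCLike 𝕜] [NormedAddCommGroup E] [InnerProductSpace 𝕜 E]
  [LinearOrder ι] [LocallyFiniteOrderBot ι] [WellFoundedLT ι]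

theorem sub_gramSchmidt_eq_sum (f : ι → E) (n : ι) :
    f n - gramSchmidt 𝕜 f n =
      ∑ i ∈ Iio n, inner 𝕜 (gramSchmidtNormed 𝕜 f i) (f n) • gramSchmidtNormed 𝕜 f i := by
  conv_lhs => rw [gramSchmidt_def'' 𝕜 f n]
  rw [add_sub_cancel_left]
  refine sum_congr rfl fun i _ => ?_
  simp only [gramSchmidtNormed, inner_smul_left, smul_smul, RCLike.conj_inv, RCLike.conj_ofReal]
  congr 1
  rw [div_eq_inv_mul, sq, mul_inv]
  ring

theorem norm_gramSchmidtNormed_le_one (f : ι → E) (n : ι) : ‖gramSchmidtNormed 𝕜 f n‖ ≤ 1 := by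
  by_cases h : gramSchmidtNormed 𝕜 f n = 0
  · simp [h]
  · exact (gramSchmidtNormed_unit_length' h).le

theorem norm_sub_gramSchmidt_le (f : ι → E) (n : ι) :
    ‖f n - gramSchmidt 𝕜 f n‖ ≤ ∑ i ∈ Iio n, ‖inner 𝕜 (gramSchmidtNormed 𝕜 f i) (f n)‖ := by
  rw [sub_gramSchmidt_eq_sum]
  refine (norm_sum_le _ _).trans (sum_le_sum fun i _ => ?_)
  rw [norm_smul]
  exact mul_le_of_le_one_right (norm_nonneg _) (norm_gramSchmidtNormed_le_one f i)

theorem norm_sub_inv_norm_smul_le (x : E) : ‖x - (‖x‖⁻¹ : 𝕜) • x‖ ≤ |‖x‖ - 1| := by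
  rcases eq_or_ne x 0 with rfl | hx
  · simp
  have hx' : 0 < ‖x‖ := norm_pos_iff.2 hx
  refine le_of_eq ?_
  calc ‖x - (‖x‖⁻¹ : 𝕜) • x‖ = ‖((1 - ‖x‖⁻¹ : ℝ) : 𝕜) • x‖ := by
        rw [RCLike.ofReal_sub, RCLike.ofReal_one, RCLike.ofReal_inv, sub_smul, one_smul]
    _ = |‖x‖ - 1| := by
        rw [norm_smul, RCLike.norm_ofReal, ← abs_of_pos hx', ← abs_mul, abs_of_pos hx']
        congr 1
        field_simp

theorem norm_sub_gramSchmidtNormed_le (f : ι → E) (n : ι) :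
    ‖f n - gramSchmidtNormed 𝕜 f n‖ ≤ 2 * ‖f n - gramSchmidt 𝕜 f n‖ + |‖f n‖ - 1| := by
  set u := gramSchmidt 𝕜 f n
  have hnorm : |‖u‖ - ‖f n‖| ≤ ‖f n - u‖ := by
    rw [norm_sub_rev (f n)]; exact abs_norm_sub_norm_le u (f n)
  calc ‖f n - gramSchmidtNormed 𝕜 f n‖ ≤ ‖f n - u‖ + ‖u - gramSchmidtNormed 𝕜 f n‖ :=
        norm_sub_le_norm_sub_add_norm_sub _ _ _
    _ ≤ ‖f n - u‖ + (|‖u‖ - ‖f n‖| + |‖f n‖ - 1|) := by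
        gcongr
        exact (norm_sub_inv_norm_smul_le u).trans (abs_sub_le _ _ _)
    _ ≤ 2 * ‖f n - u‖ + |‖f n‖ - 1| := by linarith

theorem gramSchmidt_ne_zero_of_norm_sub_lt {f : ι → E} {n : ι}
    (h : ‖f n - gramSchmidtNormed 𝕜 f n‖ < ‖f n‖) : gramSchmidt 𝕜 f n ≠ 0 := by
  intro h0
  simp [gramSchmidtNormed, h0] at h

theorem linearIndependent_of_gramSchmidt_ne_zero [Fintype ι] {f : ι → E}
    (h : ∀ n, gramSchmidt 𝕜 f n ≠ 0) : LinearIndependent 𝕜 f := by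
  have hgs : LinearIndependent 𝕜 (gramSchmidt 𝕜 f) :=
    linearIndependent_of_ne_zero_of_inner_eq_zero h fun _ _ => gramSchmidt_orthogonal 𝕜 f
  rw [linearIndependent_iff_card_eq_finrank_span] at hgs ⊢
  rwa [Set.finrank, ← span_gramSchmidt 𝕜 f]

end GramSchmidt

def AlmostOrthonormal {ι F : Type*} [DecidableEq ι] [NormedAddCommGroup F]
    [InnerProductSpace ℝ F] (δ : ℝ) (w : ι → F) : Prop :=
  ∀ i j, |⟪w i, w j⟫ - if i = j then 1 else 0| ≤ δ

namespace AlmostOrthonormal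

variable {ι F : Type*} [DecidableEq ι] [NormedAddCommGroup F] [InnerProductSpace ℝ F]
  {δ : ℝ} {w : ι → F}

theorem nonneg (hw : AlmostOrthonormal δ w) (i : ι) : 0 ≤ δ :=
  (abs_nonneg _).trans (hw i i)

theorem abs_norm_sub_one_le (hw : AlmostOrthonormal δ w) (i : ι) : |‖w i‖ - 1| ≤ δ :=
  abs_sub_one_le_of_abs_sq_sub_one_le (norm_nonneg _)
    (by simpa [real_inner_self_eq_norm_sq] using hw i i)

theorem abs_inner_le (hw : AlmostOrthonormal δ w) {i j : ι} (hij : i ≠ j) (v : F) :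
    |⟪v, w j⟫| ≤ δ + (1 + δ) * ‖w i - v‖ := by
  have hwij : |⟪w i, w j⟫| ≤ δ := by simpa [hij] using hw i j
  have hwj : ‖w j‖ ≤ 1 + δ := by linarith [(abs_le.1 (hw.abs_norm_sub_one_le j)).2]
  calc |⟪v, w j⟫| = |⟪w i, w j⟫ - ⟪w i - v, w j⟫| := by rw [inner_sub_left, sub_sub_cancel]
    _ ≤ |⟪w i, w j⟫| + ‖w i - v‖ * ‖w j‖ :=
        (abs_sub _ _).trans (add_le_add_right (abs_real_inner_le_norm _ _) _)
    _ ≤ δ + (1 + δ) * ‖w i - v‖ := by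
        rw [mul_comm]; gcongr

variable [LinearOrder ι] [LocallyFiniteOrderBot ι] [WellFoundedLT ι]

theorem norm_sub_gramSchmidtNormed_le_add_sum (hw : AlmostOrthonormal δ w) (j : ι) :
    ‖w j - gramSchmidtNormed ℝ w j‖ ≤
      (2 * #(Iio j) + 1) * δ + 2 * (1 + δ) * ∑ i ∈ Iio j, ‖w i - gramSchmidtNormed ℝ w i‖ := by
  have hinner : ∀ i ∈ Iio j, ‖⟪gramSchmidtNormed ℝ w i, w j⟫‖ ≤
      δ + (1 + δ) * ‖w i - gramSchmidtNormed ℝ w i‖ :=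
    fun i hi => hw.abs_inner_le (mem_Iio.1 hi).ne _
  calc ‖w j - gramSchmidtNormed ℝ w j‖
      ≤ 2 * ‖w j - gramSchmidt ℝ w j‖ + |‖w j‖ - 1| := norm_sub_gramSchmidtNormed_le w j
    _ ≤ 2 * ∑ i ∈ Iio j, (δ + (1 + δ) * ‖w i - gramSchmidtNormed ℝ w i‖) + δ := by
        gcongr
        · exact (norm_sub_gramSchmidt_le w j).trans (sum_le_sum hinner)
        · exact hw.abs_norm_sub_one_le j
    _ = _ := by rw [sum_add_distrib, sum_const, nsmul_eq_mul, ← mul_sum]; ring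

end AlmostOrthonormal

theorem AlmostOrthonormal.norm_sub_gramSchmidtNormed_le {F : Type*} [NormedAddCommGroup F]
    [InnerProductSpace ℝ F] {k : ℕ} {δ : ℝ} {w : Fin k → F} (hw : AlmostOrthonormal δ w)
    (hδ : δ ≤ 1) (j : Fin k) :
    ‖w j - gramSchmidtNormed ℝ w j‖ ≤ (2 * k + 1) * 5 ^ k * δ := by
  have hδ0 := hw.nonneg j
  have hrec (m : Fin k) : ‖w m - gramSchmidtNormed ℝ w m‖ ≤
      (2 * k + 1) * δ + 4 * ∑ i ∈ Iio m, ‖w i - gramSchmidtNormed ℝ w i‖ := by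
    refine (hw.norm_sub_gramSchmidtNormed_le_add_sum m).trans ?_
    have hcard : (#(Iio m) : ℝ) ≤ k := by rw [Fin.card_Iio]; exact_mod_cast m.isLt.le
    gcongr
    linarith
  calc ‖w j - gramSchmidtNormed ℝ w j‖ ≤ (2 * k + 1) * δ * (1 + 4) ^ (j : ℕ) :=
        Fin.le_mul_pow_of_le_add_mul_sum (by norm_num) hrec j
    _ ≤ (2 * k + 1) * 5 ^ k * δ := by
        rw [show (1 : ℝ) + 4 = 5 by norm_num, mul_right_comm]
        gcongr
        · norm_num
        · exact j.isLt.le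

theorem statement_8 (k : ℕ) :
    ∃ δ₀ C : ℝ, 0 < δ₀ ∧ 0 < C ∧
      ∀ (F : Type u) [NormedAddCommGroup F] [InnerProductSpace ℝ F]
        (w : Fin k → F) (δ : ℝ), 0 ≤ δ → δ ≤ δ₀ →
        (∀ i j : Fin k, |⟪w i, w j⟫ - if i = j then 1 else 0| ≤ δ) →
        LinearIndependent ℝ w ∧
        Orthonormal ℝ (gsNormed w) ∧
        Submodule.span ℝ (Set.range (gsNormed w)) = Submodule.span ℝ (Set.range w) ∧
        ∀ j : Fin k, ‖w j - gsNormed w j‖ ≤ C * δ := by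
  set C : ℝ := (2 * k + 1) * 5 ^ k
  have hC : 0 < C := by positivity
  refine ⟨1 / (2 * (C + 1)), C, by positivity, hC,
    fun F _ _ w δ hδ0 hδ (hw : AlmostOrthonormal δ w) => ?_⟩
  have hsmall : (C + 1) * δ ≤ 1 / 2 := by
    rw [le_div_iff₀ (by positivity)] at hδ; linarith
  have hclose (j : Fin k) : ‖w j - gramSchmidtNormed ℝ w j‖ ≤ C * δ :=
    hw.norm_sub_gramSchmidtNormed_le (by nlinarith) j
  have hne (j : Fin k) : gramSchmidt ℝ w j ≠ 0 := by
    refine gramSchmidt_ne_zero_of_norm_sub_lt ((hclose j).trans_lt ?_)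
    linarith [(abs_le.1 (hw.abs_norm_sub_one_le j)).1]
  have hli : LinearIndependent ℝ w := linearIndependent_of_gramSchmidt_ne_zero hne
  exact ⟨hli, gramSchmidtNormed_orthonormal hli,
    by rw [gsNormed, span_gramSchmidtNormed_range, span_gramSchmidt], hclose⟩
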